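/- Let y : [t₀,∞) → [0,∞) be absolutely continuous, 0 < σ < 1, β₂ > 0, and suppose y'(t) + β₂ y(t) ≤ C₀ y(t)^{1-σ} + m₁ for a.e. t ≥ t₀. Then y(t) ≤ (1/σ) y(t₀) e^{-β₂(t - t₀)} + (1/σ) m₁ C(β₂) + (C₀ C(β₂σ))^{1/σ}, where C(ν) = e^ν/(1-e^{-ν}). In particular limsup_{t→∞} y(t) ≤ (1/σ) m₁ C(β₂) + (C₀ C(β₂σ))^{1/σ}. -/

import Mathlib

/-!
Let `h` solve the Bernoulli equation `h' + β₂ h = C₀ h ^ (1 - σ)`; it is explicit because `h ^ σ`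
solves a linear equation, and `h ^ σ ≥ C₀ / β₂`. Concavity of `z ↦ z ^ (1 - σ)` together with
`C₀ h ^ (-σ) ≤ β₂` shows that `h + V` is a supersolution as soon as `m₁ ≤ σ β₂ V`, and a
first-crossing argument for `e ^ (β₂ t) (y - h - V)`, integrating the almost-everywhere inequality,
gives `y ≤ h + V`. Convexity of `z ↦ z ^ (1 / σ)` with weights `1 / (1 + σ)` and `σ / (1 + σ)`
splits `h t` into `y t₀ e ^ (-β₂ (t - t₀)) / σ + (C₀ / (β₂ σ)) ^ (1 / σ)`, and `1 / ν` is at most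
`e ^ ν / (1 - e ^ (-ν))`.
-/

open MeasureTheory Set Filter Real Topology

theorem one_div_le_exp_div_one_sub_exp_neg {x : ℝ} (hx : 0 < x) :
    1 / x ≤ exp x / (1 - exp (-x)) := by
  have hpos : 0 < 1 - exp (-x) := sub_pos.2 (exp_lt_one_iff.2 (neg_neg_of_pos hx))
  rw [div_le_div_iff₀ hx hpos]
  nlinarith [add_one_le_exp (-x), one_le_exp hx.le]

theorem add_one_rpow_le_mul_rpow_self {p : ℝ} (hp : 1 ≤ p) :
    (p + 1) ^ p ≤ (p + 1) * p ^ p := by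
  have hp0 : 0 < p := by linarith
  have hlog_succ : log (p + 1) ≤ log p + p⁻¹ := by
    have := log_le_sub_one_of_pos (show 0 < (p + 1) / p by positivity)
    rw [log_div (by linarith) hp0.ne', add_div, div_self hp0.ne', one_div] at this
    linarith
  have hlog : 1 - p⁻¹ ≤ log p := one_sub_inv_le_log_of_pos hp0
  rw [rpow_def_of_pos (by linarith), rpow_def_of_pos hp0, ← exp_log (show 0 < p + 1 by linarith),
    ← exp_add, log_exp, exp_le_exp]
  nlinarith [mul_le_mul_of_nonneg_left hlog_succ (sub_nonneg.2 hp), mul_inv_cancel₀ hp0.ne']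

theorem add_rpow_le_mul_rpow_add_mul_rpow {p a b : ℝ} (hp : 1 ≤ p) (ha : 0 ≤ a) (hb : 0 ≤ b) :
    (a + b) ^ p ≤ p * a ^ p + (p * b) ^ p := by
  have hp0 : 0 < p := by linarith
  have hconv := (convexOn_rpow hp).2
    (show a * (p + 1) / p ∈ Ici 0 from by simp only [mem_Ici]; positivity)
    (show b * (p + 1) ∈ Ici 0 from by simp only [mem_Ici]; positivity)
    (show 0 ≤ p / (p + 1) by positivity) (show 0 ≤ 1 / (p + 1) by positivity) (by field_simp)
  have hsum : p / (p + 1) * (a * (p + 1) / p) + 1 / (p + 1) * (b * (p + 1)) = a + b := by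
    field_simp
  simp only [smul_eq_mul, hsum] at hconv
  rw [div_rpow (by positivity) hp0.le, mul_rpow ha (by positivity), mul_rpow hb (by positivity)]
    at hconv
  rw [mul_rpow hp0.le hb]
  have hkey := add_one_rpow_le_mul_rpow_self hp
  have hA : p / (p + 1) * (a ^ p * (p + 1) ^ p / p ^ p) ≤ p * a ^ p := by
    rw [show p / (p + 1) * (a ^ p * (p + 1) ^ p / p ^ p)
      = p * a ^ p * ((p + 1) ^ p / ((p + 1) * p ^ p)) by field_simp]
    exact mul_le_of_le_one_right (by positivity) ((div_le_one (by positivity)).2 hkey)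
  have hB : 1 / (p + 1) * (b ^ p * (p + 1) ^ p) ≤ p ^ p * b ^ p := by
    rw [show 1 / (p + 1) * (b ^ p * (p + 1) ^ p) = b ^ p * ((p + 1) ^ p / (p + 1)) by ring,
      mul_comm (p ^ p)]
    exact mul_le_mul_of_nonneg_left ((div_le_iff₀' (by positivity)).2 hkey) (by positivity)
  linarith

theorem rpow_add_le_rpow_add_mul {r x v : ℝ} (hr0 : 0 ≤ r) (hr1 : r ≤ 1) (hx : 0 < x)
    (hv : 0 ≤ v) : (x + v) ^ r ≤ x ^ r + r * x ^ (r - 1) * v := by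
  have hsplit : x + v = x * (1 + v / x) := by field_simp
  have hbern := rpow_one_add_le_one_add_mul_self (s := v / x)
    (by linarith [div_nonneg hv hx.le]) hr0 hr1
  rw [hsplit, mul_rpow hx.le (by positivity), rpow_sub_one hx.ne']
  calc x ^ r * (1 + v / x) ^ r ≤ x ^ r * (1 + r * (v / x)) :=
        mul_le_mul_of_nonneg_left hbern (by positivity)
    _ = x ^ r + r * (x ^ r / x) * v := by ring

theorem le_of_hasDerivAt_of_ae_deriv_nonpos {f f' : ℝ → ℝ} {a b : ℝ} (hab : a ≤ b)
    (hf : ∀ x ∈ Icc a b, HasDerivAt f (f' x) x)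
    (hf' : ∀ᵐ x ∂volume.restrict (Ioo a b), f' x ≤ 0) : f b ≤ f a := by
  -- `max f' 0` is an integrable majorant of `f'`, since it vanishes almost everywhere
  have hzero : (fun x => max (f' x) 0) =ᵐ[volume.restrict (Ioo a b)] 0 := by
    filter_upwards [hf'] with x hx using max_eq_right hx
  have hint : IntegrableOn (fun x => max (f' x) 0) (Icc a b) := by
    rw [integrableOn_Icc_iff_integrableOn_Ioo]
    exact (integrable_congr hzero).2 (integrable_zero _ _ _)
  have hFTC := intervalIntegral.sub_le_integral_of_hasDeriv_right_of_le hab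
    (fun x hx => (hf x hx).continuousAt.continuousWithinAt)
    (fun x hx => (hf x (Ioo_subset_Icc_self hx)).hasDerivWithinAt) hint
    (fun x _ => le_max_left _ _)
  rw [intervalIntegral.integral_of_le hab, integral_Ioc_eq_integral_Ioo,
    integral_eq_zero_of_ae hzero] at hFTC
  linarith

theorem image_le_of_ae_deriv_le_deriv_boundary {f f' B B' : ℝ → ℝ} {a : ℝ}
    (hf : ∀ t ∈ Ici a, HasDerivAt f (f' t) t) (hB : ∀ t ∈ Ici a, HasDerivAt B (B' t) t)
    (ha : f a < B a) (hbound : ∀ᵐ t ∂volume.restrict (Ici a), f t < B t → f' t ≤ B' t) :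
    ∀ t ∈ Ici a, f t ≤ B t := by
  intro T hT
  by_contra! hT_gt
  set S := Icc a T ∩ (fun t => f t - B t) ⁻¹' Ici 0
  have hS : IsCompact S := by
    refine isCompact_Icc.of_isClosed_subset ?_ inter_subset_left
    refine ContinuousOn.preimage_isClosed_of_isClosed (fun t ht => ?_) isClosed_Icc isClosed_Ici
    exact ((hf t ht.1).continuousAt.sub (hB t ht.1).continuousAt).continuousWithinAt
  obtain ⟨τ, ⟨hτ_mem, hτ_cross⟩, hτ_least⟩ :=
    hS.exists_isLeast ⟨T, ⟨hT, le_rfl⟩, sub_nonneg.2 hT_gt.le⟩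
  simp only [mem_preimage, mem_Ici, sub_nonneg] at hτ_cross
  have haτ : a < τ := hτ_mem.1.lt_of_ne (by rintro rfl; linarith)
  have hbefore : ∀ t ∈ Ioo a τ, f t < B t := fun t ht => by
    by_contra! h
    exact (hτ_least ⟨⟨ht.1.le, ht.2.le.trans hτ_mem.2⟩, sub_nonneg.2 h⟩).not_gt ht.2
  have hmono := le_of_hasDerivAt_of_ae_deriv_nonpos (f := fun t => f t - B t)
    (f' := fun t => f' t - B' t) haτ.le (fun t ht => (hf t ht.1).sub (hB t ht.1)) (by
      filter_upwards [ae_restrict_of_ae_restrict_of_subset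
        (Ioo_subset_Ioi_self.trans Ioi_subset_Ici_self) hbound, ae_restrict_mem measurableSet_Ioo]
        with t h ht
      exact sub_nonpos.2 (h (hbefore t ht)))
  linarith

theorem le_of_ae_deriv_add_mul_le {y y' w w' : ℝ → ℝ} {a β : ℝ}
    (hy : ∀ t ∈ Ici a, HasDerivAt y (y' t) t) (hw : ∀ t ∈ Ici a, HasDerivAt w (w' t) t)
    (ha : y a < w a)
    (hbound : ∀ᵐ t ∂volume.restrict (Ici a), y t < w t → y' t + β * y t ≤ w' t + β * w t) :
    ∀ t ∈ Ici a, y t ≤ w t := by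
  have hweight : ∀ {u u' : ℝ → ℝ} {t : ℝ}, HasDerivAt u (u' t) t →
      HasDerivAt (fun s => exp (β * s) * u s) (exp (β * t) * (u' t + β * u t)) t := by
    intro u u' t hu
    have hexp : HasDerivAt (fun s => exp (β * s)) (exp (β * t) * β) t := by
      simpa using ((hasDerivAt_id t).const_mul β).exp
    exact (hexp.mul hu).congr_deriv (by ring)
  intro t ht
  have hcomp := image_le_of_ae_deriv_le_deriv_boundary (fun s hs => hweight (hy s hs))
    (fun s hs => hweight (hw s hs)) (mul_lt_mul_of_pos_left ha (exp_pos _)) (by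
      filter_upwards [hbound] with s hs hlt
      exact mul_le_mul_of_nonneg_left (hs ((mul_lt_mul_iff_right₀ (exp_pos _)).1 hlt))
        (exp_pos _).le) t ht
  exact (mul_le_mul_iff_right₀ (exp_pos _)).1 hcomp

theorem limsup_le_of_le_add_of_tendsto_zero {α : Type*} {l : Filter α} [l.NeBot] {u v : α → ℝ}
    {c : ℝ}
    (hv : Tendsto v l (𝓝 0)) (h : ∀ᶠ t in l, u t ≤ v t + c)
    (hu : IsCoboundedUnder (· ≤ ·) l u) : limsup u l ≤ c := by
  have hvc : Tendsto (fun t => v t + c) l (𝓝 c) := by simpa using hv.add_const c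
  calc limsup u l ≤ limsup (fun t => v t + c) l :=
        limsup_le_limsup h hu hvc.isBoundedUnder_le
    _ = c := hvc.limsup_eq

theorem mul_add_rpow_one_sub_add_le {σ β C₀ m₁ h V : ℝ} (hσ0 : 0 < σ) (hσ1 : σ ≤ 1)
    (hβ : 0 ≤ β) (hC₀ : 0 ≤ C₀) (hh : 0 ≤ h) (hV : 0 ≤ V) (hCh : C₀ ≤ β * h ^ σ)
    (hm₁ : m₁ ≤ σ * β * V) : C₀ * (h + V) ^ (1 - σ) + m₁ ≤ C₀ * h ^ (1 - σ) + β * V := by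
  rcases hC₀.eq_or_lt with rfl | hC₀
  · simp only [zero_mul, zero_add]
    nlinarith [mul_nonneg (mul_nonneg hβ hV) (sub_nonneg.2 hσ1)]
  have hh : 0 < h := hh.lt_of_ne <| by
    rintro rfl
    rw [zero_rpow hσ0.ne', mul_zero] at hCh
    linarith
  have hconc := rpow_add_le_rpow_add_mul (by linarith) (by linarith) hh hV (r := 1 - σ)
  have hCβ : C₀ * h ^ (1 - σ - 1) ≤ β := by
    rw [show 1 - σ - 1 = -σ by ring, rpow_neg hh.le, ← div_eq_mul_inv,
      div_le_iff₀ (rpow_pos_of_pos hh σ)]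
    exact hCh
  calc C₀ * (h + V) ^ (1 - σ) + m₁
      ≤ C₀ * (h ^ (1 - σ) + (1 - σ) * h ^ (1 - σ - 1) * V) + σ * β * V := by gcongr
    _ = C₀ * h ^ (1 - σ) + (1 - σ) * V * (C₀ * h ^ (1 - σ - 1)) + σ * β * V := by ring
    _ ≤ C₀ * h ^ (1 - σ) + (1 - σ) * V * β + σ * β * V := by gcongr
    _ = C₀ * h ^ (1 - σ) + β * V := by ring

/-- The solution of the Bernoulli equation `h' + β h = C₀ h ^ (1 - σ)` with
`h t₀ ^ σ = y₀ ^ σ + C₀ / β`: `h ^ σ` solves the linear equation `(h ^ σ)' + σ β h ^ σ = σ C₀`. -/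
noncomputable def bernoulliSol (σ β C₀ t₀ y₀ t : ℝ) : ℝ :=
  (y₀ ^ σ * exp (-(σ * β) * (t - t₀)) + C₀ / β) ^ (1 / σ)

section bernoulliSol

variable {σ β C₀ t₀ y₀ : ℝ}

theorem bernoulliSol_nonneg (hβ : 0 < β) (hC₀ : 0 ≤ C₀) (hy₀ : 0 ≤ y₀) (t : ℝ) :
    0 ≤ bernoulliSol σ β C₀ t₀ y₀ t :=
  rpow_nonneg (by positivity) _

theorem le_mul_bernoulliSol_rpow (hσ : 0 < σ) (hβ : 0 < β) (hC₀ : 0 ≤ C₀) (hy₀ : 0 ≤ y₀)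
    (t : ℝ) : C₀ ≤ β * bernoulliSol σ β C₀ t₀ y₀ t ^ σ := by
  rw [bernoulliSol, one_div, rpow_inv_rpow (by positivity) hσ.ne', mul_add,
    mul_div_cancel₀ _ hβ.ne']
  exact le_add_of_nonneg_left (by positivity)

theorem hasDerivAt_bernoulliSol (hσ0 : 0 < σ) (hσ1 : σ ≤ 1) (hβ : 0 < β) (hC₀ : 0 ≤ C₀)
    (hy₀ : 0 ≤ y₀) (t : ℝ) :
    HasDerivAt (bernoulliSol σ β C₀ t₀ y₀)
      (-β * bernoulliSol σ β C₀ t₀ y₀ t + C₀ * bernoulliSol σ β C₀ t₀ y₀ t ^ (1 - σ)) t := by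
  set g : ℝ → ℝ := fun s => y₀ ^ σ * exp (-(σ * β) * (s - t₀)) + C₀ / β
  have hg : 0 ≤ g t := by positivity
  have hg' : HasDerivAt g (-(σ * β) * (g t - C₀ / β)) t := by
    have hlin : HasDerivAt (fun s => -(σ * β) * (s - t₀)) (-(σ * β)) t := by
      simpa using ((hasDerivAt_id t).sub_const t₀).const_mul (-(σ * β))
    exact ((hlin.exp.const_mul (y₀ ^ σ)).add_const (C₀ / β)).congr_deriv (by simp only [g]; ring)
  have hpow := (hasDerivAt_rpow_const (p := 1 / σ) (x := g t)
    (Or.inr ((le_div_iff₀ hσ0).2 (by linarith)))).comp t hg'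
  refine hpow.congr_deriv ?_
  have hsplit : g t ^ (1 / σ) = g t ^ (1 / σ - 1) * g t := by
    rw [← rpow_add_one' hg (by simp [hσ0.ne'])]
    ring_nf
  have hexp : g t ^ (1 / σ - 1) = (g t ^ (1 / σ)) ^ (1 - σ) := by
    rw [← rpow_mul hg]
    congr 1
    field_simp
  change _ = -β * g t ^ (1 / σ) + C₀ * (g t ^ (1 / σ)) ^ (1 - σ)
  rw [← hexp, hsplit]
  field_simp
  ring

theorem self_le_bernoulliSol (hσ0 : 0 < σ) (hβ : 0 < β) (hC₀ : 0 ≤ C₀)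
    (hy₀ : 0 ≤ y₀) : y₀ ≤ bernoulliSol σ β C₀ t₀ y₀ t₀ := by
  rw [bernoulliSol, sub_self, mul_zero, exp_zero, mul_one]
  calc y₀ = (y₀ ^ σ) ^ (1 / σ) := by rw [one_div, rpow_rpow_inv hy₀ hσ0.ne']
    _ ≤ (y₀ ^ σ + C₀ / β) ^ (1 / σ) := by
        gcongr
        exact le_add_of_nonneg_right (by positivity)

theorem bernoulliSol_le (hσ0 : 0 < σ) (hσ1 : σ ≤ 1) (hβ : 0 < β) (hC₀ : 0 ≤ C₀)
    (hy₀ : 0 ≤ y₀) (t : ℝ) :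
    bernoulliSol σ β C₀ t₀ y₀ t
      ≤ 1 / σ * y₀ * exp (-β * (t - t₀)) + (1 / σ * (C₀ / β)) ^ (1 / σ) := by
  have hexp : (y₀ ^ σ * exp (-(σ * β) * (t - t₀))) ^ (1 / σ) = y₀ * exp (-β * (t - t₀)) := by
    rw [mul_rpow (by positivity) (exp_pos _).le, one_div, rpow_rpow_inv hy₀ hσ0.ne',
      ← exp_mul]
    congr 2
    field_simp
  calc bernoulliSol σ β C₀ t₀ y₀ t
      ≤ 1 / σ * (y₀ ^ σ * exp (-(σ * β) * (t - t₀))) ^ (1 / σ) + (1 / σ * (C₀ / β)) ^ (1 / σ) :=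
        add_rpow_le_mul_rpow_add_mul_rpow ((le_div_iff₀ hσ0).2 (by linarith)) (by positivity)
          (by positivity)
    _ = 1 / σ * y₀ * exp (-β * (t - t₀)) + (1 / σ * (C₀ / β)) ^ (1 / σ) := by
        rw [hexp, mul_assoc]

end bernoulliSol

theorem le_bernoulliSol_add_of_ae_deriv_le {y y' : ℝ → ℝ} {t₀ σ β C₀ m₁ V : ℝ}
    (hσ0 : 0 < σ) (hσ1 : σ ≤ 1) (hβ : 0 < β) (hC₀ : 0 ≤ C₀) (hV : 0 < V)
    (hm₁ : m₁ ≤ σ * β * V) (hnonneg : ∀ t ∈ Ici t₀, 0 ≤ y t)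
    (hderiv : ∀ t ∈ Ici t₀, HasDerivAt y (y' t) t)
    (hineq : ∀ᵐ t ∂(volume.restrict (Ici t₀)), y' t + β * y t ≤ C₀ * y t ^ (1 - σ) + m₁) :
    ∀ t ∈ Ici t₀, y t ≤ bernoulliSol σ β C₀ t₀ (y t₀) t + V := by
  have hy₀ : 0 ≤ y t₀ := hnonneg t₀ (mem_Ici.2 le_rfl)
  set h := bernoulliSol σ β C₀ t₀ (y t₀)
  refine le_of_ae_deriv_add_mul_le (β := β) hderiv
    (fun s _ => (hasDerivAt_bernoulliSol (t₀ := t₀) hσ0 hσ1 hβ hC₀ hy₀ s).add_const V)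
    (by linarith [self_le_bernoulliSol hσ0 hβ hC₀ hy₀ (t₀ := t₀)]) ?_
  filter_upwards [hineq, ae_restrict_mem measurableSet_Ici] with s hs hst hlt
  have hmono : y s ^ (1 - σ) ≤ (h s + V) ^ (1 - σ) :=
    rpow_le_rpow (hnonneg s hst) hlt.le (by linarith)
  have hsuper := mul_add_rpow_one_sub_add_le hσ0 hσ1 hβ.le hC₀
    (bernoulliSol_nonneg (t₀ := t₀) hβ hC₀ hy₀ s) hV.le
    (le_mul_bernoulliSol_rpow hσ0 hβ hC₀ hy₀ s) hm₁
  linarith [mul_le_mul_of_nonneg_left hmono hC₀]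

theorem le_sublinear_gronwall_bound {y y' : ℝ → ℝ} {t₀ σ β C₀ m₁ : ℝ}
    (hσ0 : 0 < σ) (hσ1 : σ ≤ 1) (hβ : 0 < β) (hC₀ : 0 ≤ C₀) (hm₁ : 0 ≤ m₁)
    (hnonneg : ∀ t ∈ Ici t₀, 0 ≤ y t) (hderiv : ∀ t ∈ Ici t₀, HasDerivAt y (y' t) t)
    (hineq : ∀ᵐ t ∂(volume.restrict (Ici t₀)), y' t + β * y t ≤ C₀ * y t ^ (1 - σ) + m₁) :
    ∀ t ∈ Ici t₀, y t ≤ 1 / σ * y t₀ * exp (-β * (t - t₀))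
      + (1 / σ * (C₀ / β)) ^ (1 / σ) + m₁ / (σ * β) := by
  intro t ht
  refine le_of_forall_pos_le_add fun ε hε => ?_
  -- `ε > 0` makes the comparison with the supersolution strict at `t₀`
  have hm₁V : m₁ ≤ σ * β * (m₁ / (σ * β) + ε) := by
    rw [mul_add, mul_div_cancel₀ _ (by positivity)]
    nlinarith [mul_pos (mul_pos hσ0 hβ) hε]
  have hyh := le_bernoulliSol_add_of_ae_deriv_le hσ0 hσ1 hβ hC₀ (by positivity) hm₁V hnonneg
    hderiv hineq t ht
  linarith [bernoulliSol_le hσ0 hσ1 hβ hC₀ (hnonneg t₀ (mem_Ici.2 le_rfl)) t (t₀ := t₀)]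

/-- Gronwall-type lemma with constant data (application of Lemma 2.7 in
Lemma 4.2): a dissipative inequality with a sublinear term yields an
eventually uniform bound. -/
theorem gronwall_sublinear_const
    (y y' : ℝ → ℝ) (t₀ σ β₂ C₀ m₁ : ℝ)
    (hσ0 : 0 < σ) (hσ1 : σ < 1) (hβ₂ : 0 < β₂) (hC₀ : 0 ≤ C₀) (hm₁ : 0 ≤ m₁)
    (hnonneg : ∀ t ∈ Ici t₀, 0 ≤ y t)
    (hderiv : ∀ t ∈ Ici t₀, HasDerivAt y (y' t) t)
    (hineq : ∀ᵐ t ∂(volume.restrict (Ici t₀)),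
      y' t + β₂ * y t ≤ C₀ * y t ^ (1 - σ) + m₁) :
    (∀ t ∈ Ici t₀,
      y t ≤ (1 / σ) * y t₀ * Real.exp (-β₂ * (t - t₀))
        + (1 / σ) * m₁ * (Real.exp β₂ / (1 - Real.exp (-β₂)))
        + (C₀ * (Real.exp (β₂ * σ) / (1 - Real.exp (-(β₂ * σ))))) ^ (1 / σ)) ∧
    Filter.limsup y Filter.atTop ≤
      (1 / σ) * m₁ * (Real.exp β₂ / (1 - Real.exp (-β₂)))
        + (C₀ * (Real.exp (β₂ * σ) / (1 - Real.exp (-(β₂ * σ))))) ^ (1 / σ) := by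
  have hbound := le_sublinear_gronwall_bound hσ0 hσ1.le hβ₂ hC₀ hm₁ hnonneg hderiv hineq
  have hm_budget : m₁ / (σ * β₂) ≤ (1 / σ) * m₁ * (Real.exp β₂ / (1 - Real.exp (-β₂))) := by
    rw [show m₁ / (σ * β₂) = 1 / σ * m₁ * (1 / β₂) by field_simp]
    exact mul_le_mul_of_nonneg_left (one_div_le_exp_div_one_sub_exp_neg hβ₂) (by positivity)
  have hC_budget : (1 / σ * (C₀ / β₂)) ^ (1 / σ)
      ≤ (C₀ * (Real.exp (β₂ * σ) / (1 - Real.exp (-(β₂ * σ))))) ^ (1 / σ) := by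
    rw [show 1 / σ * (C₀ / β₂) = C₀ * (1 / (β₂ * σ)) by field_simp]
    exact rpow_le_rpow (by positivity)
      (mul_le_mul_of_nonneg_left (one_div_le_exp_div_one_sub_exp_neg (by positivity)) hC₀)
      (by positivity)
  have hdecay : Tendsto (fun t => 1 / σ * y t₀ * exp (-β₂ * (t - t₀))) atTop (𝓝 0) := by
    have hlin : Tendsto (fun t => β₂ * (t - t₀)) atTop atTop :=
      (tendsto_atTop_add_const_right _ (-t₀) tendsto_id).const_mul_atTop hβ₂
    simpa [neg_mul] using (tendsto_exp_neg_atTop_nhds_zero.comp hlin).const_mul (1 / σ * y t₀)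
  refine ⟨fun t ht => by linarith [hbound t ht], limsup_le_of_le_add_of_tendsto_zero hdecay ?_
    (isCoboundedUnder_le_of_eventually_le _ ((eventually_ge_atTop t₀).mono hnonneg))⟩
  filter_upwards [eventually_ge_atTop t₀] with t ht
  linarith [hbound t ht]
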